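/- The pair β_n = q^{n²+n}/(q²;q)_{2n}, with α_{3m-1} = q^{3m²-2m}, α_{3m} = q^{3m²+2m}, α_{3m+1} = -q^{3m²+4m+1} - q^{3m²+2m}, is a Bailey pair relative to a = q. -/

import Mathlib

open Finset

noncomputable def qPoch (a q : ℂ) (n : ℕ) : ℂ := ∏ i ∈ Finset.range n, (1 - a * q ^ i)

noncomputable def qInf (q : ℂ) : ℂ := ∏' i : ℕ, (1 - q ^ (i + 1))

def zsgn (m : ℤ) : ℤ := if 0 ≤ m then 1 else -1

noncomputable def alphaS7 (q : ℂ) (n : ℕ) : ℂ :=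
  if n % 3 = 0 then q ^ (3 * ((n : ℤ) / 3) ^ 2 + 2 * ((n : ℤ) / 3) : ℤ)
  else if n % 3 = 1 then -q ^ (3 * ((n : ℤ) / 3) ^ 2 + 4 * ((n : ℤ) / 3) + 1 : ℤ) - q ^ (3 * ((n : ℤ) / 3) ^ 2 + 2 * ((n : ℤ) / 3) : ℤ)
  else q ^ (3 * (((n : ℤ) + 1) / 3) ^ 2 - 2 * (((n : ℤ) + 1) / 3) : ℤ)

/-!
Write `S N = ∑_{r ≤ N} α_r / ((q;q)_{N-r} (q²;q)_{N+r})`. Both `S N` and `q^{N²+N} / (q²;q)_{2N}`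
equal `1` at `N = 0` and satisfy the first-order recurrence
`(1 - q^{2N+2}) (1 - q^{2N+3}) S (N+1) = q^{2N+2} S N`.
For the sum this is creative telescoping: the summands of the recurrence are differences
`G(N+1, r) - G(N+1, r+1)` of the certificate `G(N, r) = c_r(N - r) / ((q;q)_{N-r} (q²;q)_{N+r-1})`,
whose numerators `c_r(s)` depend on `r mod 3` like `α_r`; `G(N, 0) = 0`, and the last summand is `G(N, N)`
itself. Each telescoping step is then a polynomial identity in `q`.
-/

theorem one_sub_ne_zero_of_norm_lt_one {R : Type*} [NormedRing R] [NormOneClass R] {z : R}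
    (hz : ‖z‖ < 1) : 1 - z ≠ 0 := by
  rw [sub_ne_zero]
  rintro rfl
  simp at hz

theorem one_sub_pow_ne_zero {R : Type*} [NormedRing R] [NormOneClass R] {q : R}
    (hq : ‖q‖ < 1) {j : ℕ} (hj : j ≠ 0) : 1 - q ^ j ≠ 0 :=
  one_sub_ne_zero_of_norm_lt_one ((norm_pow_le' q (Nat.pos_of_ne_zero hj)).trans_lt
    (pow_lt_one₀ (norm_nonneg q) hq hj))

@[simp]
theorem qPoch_zero (a q : ℂ) : qPoch a q 0 = 1 := prod_range_zero _

theorem qPoch_succ (a q : ℂ) (n : ℕ) : qPoch a q (n + 1) = qPoch a q n * (1 - a * q ^ n) :=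
  prod_range_succ _ _

theorem qPoch_self_succ (q : ℂ) (n : ℕ) : qPoch q q (n + 1) = qPoch q q n * (1 - q ^ (n + 1)) := by
  rw [qPoch_succ, pow_succ']

theorem qPoch_sq_succ (q : ℂ) (n : ℕ) : qPoch (q ^ 2) q (n + 1) = qPoch (q ^ 2) q n * (1 - q ^ (n + 2)) := by
  rw [qPoch_succ, pow_add q n 2, mul_comm (q ^ n)]

theorem qPoch_ne_zero {a q : ℂ} (ha : ‖a‖ < 1) (hq : ‖q‖ ≤ 1) (n : ℕ) : qPoch a q n ≠ 0 :=
  prod_ne_zero_iff.2 fun i _ => one_sub_ne_zero_of_norm_lt_one <| by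
    rw [norm_mul, norm_pow]
    exact (mul_le_of_le_one_right (norm_nonneg a) (pow_le_one₀ (norm_nonneg q) hq)).trans_lt ha

theorem qPoch_sq_ne_zero {q : ℂ} (hq : ‖q‖ < 1) (n : ℕ) : qPoch (q ^ 2) q n ≠ 0 :=
  qPoch_ne_zero (by rw [norm_pow]; exact pow_lt_one₀ (norm_nonneg q) hq two_ne_zero) hq.le n

theorem sub_div_eq_sub_div_of_clear_denom {K : Type*} [Field K] {P Q a b L w x c₀ c₁ : K}
    (hP : P ≠ 0) (hQ : Q ≠ 0) (ha : a ≠ 0) (hb : b ≠ 0)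
    (h : L * x - w * a * b * x = c₀ * b - c₁ * a) :
    L * (x / (P * a * (Q * b))) - w * (x / (P * Q)) = c₀ / (P * a * Q) - c₁ / (P * (Q * b)) := by
  field_simp
  linear_combination h

theorem alphaS7_three_mul (q : ℂ) (m : ℕ) : alphaS7 q (3 * m) = q ^ (3 * m ^ 2 + 2 * m) := by
  have hm : ((3 * m : ℕ) : ℤ) / 3 = m := by omega
  rw [alphaS7, if_pos (by omega), hm, ← zpow_natCast]
  push_cast
  rfl

theorem alphaS7_three_mul_add_one (q : ℂ) (m : ℕ) :
    alphaS7 q (3 * m + 1) = -q ^ (3 * m ^ 2 + 4 * m + 1) - q ^ (3 * m ^ 2 + 2 * m) := by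
  have hm : ((3 * m + 1 : ℕ) : ℤ) / 3 = m := by omega
  rw [alphaS7, if_neg (by omega), if_pos (by omega), hm, ← zpow_natCast, ← zpow_natCast]
  push_cast
  rfl

theorem alphaS7_three_mul_add_two (q : ℂ) (m : ℕ) :
    alphaS7 q (3 * m + 2) = q ^ (3 * m ^ 2 + 4 * m + 1) := by
  have hm : (((3 * m + 2 : ℕ) : ℤ) + 1) / 3 = m + 1 := by omega
  rw [alphaS7, if_neg (by omega), if_neg (by omega), hm, ← zpow_natCast]
  congr 1
  push_cast
  ring

namespace SlaterA8

noncomputable def baileyTerm (q : ℂ) (N r : ℕ) : ℂ :=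
  alphaS7 q r / (qPoch q q (N - r) * qPoch (q ^ 2) q (N + r))

noncomputable def certNum (q : ℂ) (r s : ℕ) : ℂ :=
  if r % 3 = 0 then
    q ^ (3 * (r / 3) ^ 2 + 2 * (r / 3) + s) * (1 - q ^ (2 * (r / 3))) *
      (1 + q ^ (s + 2 * (r / 3)) + q ^ (s + 4 * (r / 3)))
  else if r % 3 = 1 then
    -q ^ (3 * (r / 3) ^ 2 + 2 * (r / 3)) *
      (1 + q ^ (s + 2 * (r / 3) + 1) - q ^ (2 * s + 6 * (r / 3) + 2) - q ^ (2 * s + 8 * (r / 3) + 3))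
  else
    q ^ (3 * (r / 3) ^ 2 + 4 * (r / 3) + 1) *
      (1 + q ^ (s + 4 * (r / 3) + 3) - q ^ (2 * s + 4 * (r / 3) + 3) - q ^ (2 * s + 6 * (r / 3) + 4))

/-- At `N = r = 0` the index `N + r - 1` is truncated, harmlessly since `certNum q 0 s = 0`. -/
noncomputable def cert (q : ℂ) (N r : ℕ) : ℂ :=
  certNum q r (N - r) / (qPoch q q (N - r) * qPoch (q ^ 2) q (N + r - 1))

theorem certNum_three_mul (q : ℂ) (m s : ℕ) :
    certNum q (3 * m) s = q ^ (3 * m ^ 2 + 2 * m + s) * (1 - q ^ (2 * m)) *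
      (1 + q ^ (s + 2 * m) + q ^ (s + 4 * m)) := by
  rw [certNum, if_pos (by omega), show 3 * m / 3 = m by omega]

theorem certNum_three_mul_add_one (q : ℂ) (m s : ℕ) :
    certNum q (3 * m + 1) s = -q ^ (3 * m ^ 2 + 2 * m) *
      (1 + q ^ (s + 2 * m + 1) - q ^ (2 * s + 6 * m + 2) - q ^ (2 * s + 8 * m + 3)) := by
  rw [certNum, if_neg (by omega), if_pos (by omega), show (3 * m + 1) / 3 = m by omega]

theorem certNum_three_mul_add_two (q : ℂ) (m s : ℕ) :
    certNum q (3 * m + 2) s = q ^ (3 * m ^ 2 + 4 * m + 1) *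
      (1 + q ^ (s + 4 * m + 3) - q ^ (2 * s + 4 * m + 3) - q ^ (2 * s + 6 * m + 4)) := by
  rw [certNum, if_neg (by omega), if_neg (by omega), show (3 * m + 2) / 3 = m by omega]

theorem certNum_zero_left (q : ℂ) (s : ℕ) : certNum q 0 s = 0 := by
  simpa using certNum_three_mul q 0 s

theorem certNum_zero_right (q : ℂ) (r : ℕ) : certNum q r 0 = (1 - q ^ (2 * r)) * alphaS7 q r := by
  obtain ⟨m, rfl | rfl | rfl⟩ : ∃ m, r = 3 * m ∨ r = 3 * m + 1 ∨ r = 3 * m + 2 := ⟨r / 3, by omega⟩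
  · rw [certNum_three_mul, alphaS7_three_mul]; ring
  · rw [certNum_three_mul_add_one, alphaS7_three_mul_add_one]; ring
  · rw [certNum_three_mul_add_two, alphaS7_three_mul_add_two]; ring

theorem certNum_telescope (q : ℂ) (r s : ℕ) :
    (1 - q ^ (2 * (r + s) + 2)) * (1 - q ^ (2 * (r + s) + 3)) * alphaS7 q r
        - q ^ (2 * (r + s) + 2) * (1 - q ^ (s + 1)) * (1 - q ^ (2 * r + s + 2)) * alphaS7 q r
      = certNum q r (s + 1) * (1 - q ^ (2 * r + s + 2)) - certNum q (r + 1) s * (1 - q ^ (s + 1)) := by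
  obtain ⟨m, rfl | rfl | rfl⟩ : ∃ m, r = 3 * m ∨ r = 3 * m + 1 ∨ r = 3 * m + 2 := ⟨r / 3, by omega⟩
  · rw [alphaS7_three_mul, certNum_three_mul, certNum_three_mul_add_one]; ring
  · rw [alphaS7_three_mul_add_one, certNum_three_mul_add_one, certNum_three_mul_add_two]; ring
  · rw [alphaS7_three_mul_add_two, certNum_three_mul_add_two,
      show 3 * m + 2 + 1 = 3 * (m + 1) by ring, certNum_three_mul]; ring


theorem cert_zero_right (q : ℂ) (N : ℕ) : cert q N 0 = 0 := by
  rw [cert, certNum_zero_left, zero_div]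

variable {q : ℂ}

theorem baileyTerm_telescope (hq : ‖q‖ < 1) {N r : ℕ} (hr : r ≤ N) :
    (1 - q ^ (2 * N + 2)) * (1 - q ^ (2 * N + 3)) * baileyTerm q (N + 1) r
        - q ^ (2 * N + 2) * baileyTerm q N r
      = cert q (N + 1) r - cert q (N + 1) (r + 1) := by
  obtain ⟨s, rfl⟩ := Nat.exists_eq_add_of_le hr
  rw [baileyTerm, baileyTerm, cert, cert, show r + s + 1 - r = s + 1 by omega,
    show r + s + 1 - (r + 1) = s by omega, show r + s - r = s by omega,
    show r + s + 1 + r - 1 = 2 * r + s by omega, show r + s + 1 + r = 2 * r + s + 1 by omega,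
    show r + s + 1 + (r + 1) - 1 = 2 * r + s + 1 by omega, show r + s + r = 2 * r + s by omega,
    qPoch_self_succ, qPoch_sq_succ]
  exact sub_div_eq_sub_div_of_clear_denom (qPoch_ne_zero hq hq.le s) (qPoch_sq_ne_zero hq _)
    (one_sub_pow_ne_zero hq (by omega)) (one_sub_pow_ne_zero hq (by omega)) (certNum_telescope q r s)

theorem baileyTerm_diag (hq : ‖q‖ < 1) (N : ℕ) :
    (1 - q ^ (2 * N + 2)) * (1 - q ^ (2 * N + 3)) * baileyTerm q (N + 1) (N + 1)
      = cert q (N + 1) (N + 1) := by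
  have hQ := qPoch_sq_ne_zero hq (2 * N + 1)
  have hb := one_sub_pow_ne_zero hq (show 2 * N + 3 ≠ 0 by omega)
  rw [baileyTerm, cert, Nat.sub_self, qPoch_zero, certNum_zero_right,
    show N + 1 + (N + 1) - 1 = 2 * N + 1 by omega, show N + 1 + (N + 1) = 2 * N + 1 + 1 by omega,
    qPoch_sq_succ]
  field_simp
  ring

theorem sum_baileyTerm_succ (hq : ‖q‖ < 1) (N : ℕ) :
    (1 - q ^ (2 * N + 2)) * (1 - q ^ (2 * N + 3)) * ∑ r ∈ range (N + 2), baileyTerm q (N + 1) r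
      = q ^ (2 * N + 2) * ∑ r ∈ range (N + 1), baileyTerm q N r := by
  have htel : (1 - q ^ (2 * N + 2)) * (1 - q ^ (2 * N + 3)) *
        ∑ r ∈ range (N + 1), baileyTerm q (N + 1) r
      - q ^ (2 * N + 2) * ∑ r ∈ range (N + 1), baileyTerm q N r
      = cert q (N + 1) 0 - cert q (N + 1) (N + 1) := by
    rw [mul_sum, mul_sum, ← sum_sub_distrib, ← sum_range_sub']
    exact sum_congr rfl fun r hr => baileyTerm_telescope hq (mem_range_succ_iff.1 hr)
  rw [sum_range_succ, mul_add]
  linear_combination htel + baileyTerm_diag hq N + cert_zero_right q (N + 1)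

theorem sum_baileyTerm (hq : ‖q‖ < 1) (N : ℕ) :
    ∑ r ∈ range (N + 1), baileyTerm q N r = q ^ (N ^ 2 + N) / qPoch (q ^ 2) q (2 * N) := by
  induction N with
  | zero => simp [baileyTerm, alphaS7]
  | succ N ih =>
    have ha := one_sub_pow_ne_zero hq (show 2 * N + 2 ≠ 0 by omega)
    have hb := one_sub_pow_ne_zero hq (show 2 * N + 3 ≠ 0 by omega)
    have hQ := qPoch_sq_ne_zero hq (2 * N)
    apply mul_left_cancel₀ (mul_ne_zero ha hb)
    rw [sum_baileyTerm_succ hq, ih, show 2 * (N + 1) = 2 * N + 1 + 1 by ring, qPoch_sq_succ,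
      qPoch_sq_succ]
    field_simp
    ring

end SlaterA8

theorem stmt7 (q : ℂ) (hq : ‖q‖ < 1) (n : ℕ) :
    q ^ (n ^ 2 + n) / qPoch (q ^ 2) q (2 * n)
      = ∑ r ∈ Finset.range (n + 1), alphaS7 q r / (qPoch q q (n - r) * qPoch (q ^ 2) q (n + r)) :=
  (SlaterA8.sum_baileyTerm hq n).symm
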